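/- Prop: Let H₀, H₁ be complex Hilbert spaces, H := H₀ ⊕ H₁, and let F ∈ B(H) have block-matrix form [[k, m], [l, w − 1]]. Then q(F*) = 0 if and only if w is a coisometry, k + k* + m m* = 0 and l = −w m*. -/
import Mathlib


set_option synthInstance.maxHeartbeats 1000000
set_option maxHeartbeats 1000000

noncomputable section

open ContinuousLinearMap

variable {H₀ H₁ : Type*} [NormedAddCommGroup H₀] [InnerProductSpace ℂ H₀] [CompleteSpace H₀]
  [NormedAddCommGroup H₁] [InnerProductSpace ℂ H₁] [CompleteSpace H₁]

/-- The inclusion of the first summand into the Hilbert-space direct sum `H₀ ⊕ H₁`. -/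
def inlL : H₀ →L[ℂ] WithLp 2 (H₀ × H₁) :=
  ((WithLp.prodContinuousLinearEquiv 2 ℂ H₀ H₁).symm.toContinuousLinearMap).comp
    (ContinuousLinearMap.inl ℂ H₀ H₁)

/-- The inclusion of the second summand into the Hilbert-space direct sum `H₀ ⊕ H₁`. -/
def inrL : H₁ →L[ℂ] WithLp 2 (H₀ × H₁) :=
  ((WithLp.prodContinuousLinearEquiv 2 ℂ H₀ H₁).symm.toContinuousLinearMap).comp
    (ContinuousLinearMap.inr ℂ H₀ H₁)

/-- The projection of the Hilbert-space direct sum `H₀ ⊕ H₁` onto the first summand. -/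
def fstL : WithLp 2 (H₀ × H₁) →L[ℂ] H₀ :=
  (ContinuousLinearMap.fst ℂ H₀ H₁).comp
    (WithLp.prodContinuousLinearEquiv 2 ℂ H₀ H₁).toContinuousLinearMap

/-- The projection of the Hilbert-space direct sum `H₀ ⊕ H₁` onto the second summand. -/
def sndL : WithLp 2 (H₀ × H₁) →L[ℂ] H₁ :=
  (ContinuousLinearMap.snd ℂ H₀ H₁).comp
    (WithLp.prodContinuousLinearEquiv 2 ℂ H₀ H₁).toContinuousLinearMap

/-- `Δ`: the orthogonal projection of `H₀ ⊕ H₁` onto the second summand `H₁`. -/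
def Delta (H₀ H₁ : Type*) [NormedAddCommGroup H₀] [InnerProductSpace ℂ H₀] [CompleteSpace H₀]
    [NormedAddCommGroup H₁] [InnerProductSpace ℂ H₁] [CompleteSpace H₁] :
    WithLp 2 (H₀ × H₁) →L[ℂ] WithLp 2 (H₀ × H₁) :=
  inrL.comp sndL

/-- `Δ⊥ = 1 - Δ`: the orthogonal projection of `H₀ ⊕ H₁` onto the first summand `H₀`. -/
def DeltaPerp (H₀ H₁ : Type*) [NormedAddCommGroup H₀] [InnerProductSpace ℂ H₀] [CompleteSpace H₀]
    [NormedAddCommGroup H₁] [InnerProductSpace ℂ H₁] [CompleteSpace H₁] :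
    WithLp 2 (H₀ × H₁) →L[ℂ] WithLp 2 (H₀ × H₁) :=
  1 - Delta H₀ H₁

/-- `q(F) := F* + F + F* Δ F`. -/
def qOp (F : WithLp 2 (H₀ × H₁) →L[ℂ] WithLp 2 (H₀ × H₁)) :
    WithLp 2 (H₀ × H₁) →L[ℂ] WithLp 2 (H₀ × H₁) :=
  star F + F + star F * (Delta H₀ H₁ * F)


set_option linter.unusedSectionVars false

section Aux
variable {X Y : Type*} [NormedAddCommGroup X] [InnerProductSpace ℂ X] [CompleteSpace X]
  [NormedAddCommGroup Y] [InnerProductSpace ℂ Y] [CompleteSpace Y]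

lemma fstL_inlL : fstL ∘L (inlL : H₀ →L[ℂ] WithLp 2 (H₀ × H₁)) = 1 := by ext x; rfl
lemma sndL_inrL : sndL ∘L (inrL : H₁ →L[ℂ] WithLp 2 (H₀ × H₁)) = 1 := by ext x; rfl
lemma fstL_inrL : (fstL ∘L inrL : H₁ →L[ℂ] H₀) = 0 := by ext x; rfl
lemma sndL_inlL : (sndL ∘L inlL : H₀ →L[ℂ] H₁) = 0 := by ext x; rfl

lemma decompL :
    (inlL ∘L fstL) + (inrL ∘L sndL)
      = (1 : WithLp 2 (H₀ × H₁) →L[ℂ] WithLp 2 (H₀ × H₁)) := by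
  apply ContinuousLinearMap.ext; intro x
  apply (WithLp.prodContinuousLinearEquiv 2 ℂ H₀ H₁).injective
  simp [inlL, fstL, inrL, sndL]
  rfl

lemma adjoint_inlL : ContinuousLinearMap.adjoint (inlL (H₀ := H₀) (H₁ := H₁)) = fstL := by
  symm
  rw [ContinuousLinearMap.eq_adjoint_iff]
  intro x y
  simp [fstL, inlL, WithLp.prod_inner_apply]

lemma adjoint_inrL : ContinuousLinearMap.adjoint (inrL (H₀ := H₀) (H₁ := H₁)) = sndL := by
  symm
  rw [ContinuousLinearMap.eq_adjoint_iff]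
  intro x y
  simp [sndL, inrL, WithLp.prod_inner_apply]

lemma adjoint_fstL : ContinuousLinearMap.adjoint (fstL (H₀ := H₀) (H₁ := H₁)) = inlL := by
  rw [← adjoint_inlL, ContinuousLinearMap.adjoint_adjoint]

lemma adjoint_sndL : ContinuousLinearMap.adjoint (sndL (H₀ := H₀) (H₁ := H₁)) = inrL := by
  rw [← adjoint_inrL, ContinuousLinearMap.adjoint_adjoint]

lemma decomp_apply (y : WithLp 2 (H₀ × H₁)) : inlL (fstL y) + inrL (sndL y) = y := by
  have := congrArg (fun S : WithLp 2 (H₀ × H₁) →L[ℂ] WithLp 2 (H₀ × H₁) => S y) decompL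
  simpa using this

lemma block_ext (T : WithLp 2 (H₀ × H₁) →L[ℂ] WithLp 2 (H₀ × H₁))
    (h00 : fstL ∘L (T ∘L inlL) = 0) (h01 : fstL ∘L (T ∘L inrL) = 0)
    (h10 : sndL ∘L (T ∘L inlL) = 0) (h11 : sndL ∘L (T ∘L inrL) = 0) : T = 0 := by
  apply ContinuousLinearMap.ext; intro x
  have e00 : fstL (T (inlL (fstL x))) = 0 := by
    have := congrArg (fun S : H₀ →L[ℂ] H₀ => S (fstL x)) h00; simpa using this
  have e10 : sndL (T (inlL (fstL x))) = 0 := by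
    have := congrArg (fun S : H₀ →L[ℂ] H₁ => S (fstL x)) h10; simpa using this
  have e01 : fstL (T (inrL (sndL x))) = 0 := by
    have := congrArg (fun S : H₁ →L[ℂ] H₀ => S (sndL x)) h01; simpa using this
  have e11 : sndL (T (inrL (sndL x))) = 0 := by
    have := congrArg (fun S : H₁ →L[ℂ] H₁ => S (sndL x)) h11; simpa using this
  have hx : T x = T (inlL (fstL x)) + T (inrL (sndL x)) := by
    rw [← map_add, decomp_apply]
  rw [hx, ← decomp_apply (T (inlL (fstL x))), ← decomp_apply (T (inrL (sndL x))),
    e00, e10, e01, e11]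
  simp

lemma mul_block (p : WithLp 2 (H₀ × H₁) →L[ℂ] X) (j : Y →L[ℂ] WithLp 2 (H₀ × H₁))
    (A B : WithLp 2 (H₀ × H₁) →L[ℂ] WithLp 2 (H₀ × H₁)) :
    p ∘L ((A ∘L B) ∘L j) =
      (p ∘L (A ∘L inlL)) ∘L (fstL ∘L (B ∘L j)) + (p ∘L (A ∘L inrL)) ∘L (sndL ∘L (B ∘L j)) := by
  apply ContinuousLinearMap.ext; intro y
  simp only [ContinuousLinearMap.comp_apply, ContinuousLinearMap.add_apply]
  conv_lhs => rw [← decomp_apply (B (j y))]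
  rw [map_add, map_add]

lemma adjoint_block (p : WithLp 2 (H₀ × H₁) →L[ℂ] X) (j : Y →L[ℂ] WithLp 2 (H₀ × H₁))
    (A : WithLp 2 (H₀ × H₁) →L[ℂ] WithLp 2 (H₀ × H₁)) :
    ContinuousLinearMap.adjoint (p ∘L (A ∘L j)) =
      ContinuousLinearMap.adjoint j ∘L
        (ContinuousLinearMap.adjoint A ∘L ContinuousLinearMap.adjoint p) := by
  rw [ContinuousLinearMap.adjoint_comp, ContinuousLinearMap.adjoint_comp,
    ContinuousLinearMap.comp_assoc]

lemma fstL_inrL_apply (x : H₁) : fstL (H₀ := H₀) (H₁ := H₁) (inrL (H₀ := H₀) x) = 0 := by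
  have := congrArg (fun S : H₁ →L[ℂ] H₀ => S x) (fstL_inrL (H₀ := H₀) (H₁ := H₁)); simpa using this

lemma sndL_inrL_apply (x : H₁) : sndL (H₀ := H₀) (H₁ := H₁) (inrL (H₀ := H₀) x) = x := by
  have := congrArg (fun S : H₁ →L[ℂ] H₁ => S x) (sndL_inrL (H₀ := H₀) (H₁ := H₁)); simpa using this

lemma fstL_Delta (B : Y →L[ℂ] WithLp 2 (H₀ × H₁)) :
    fstL ∘L (((inrL (H₀ := H₀) (H₁ := H₁)) ∘L sndL) ∘L B) = 0 := by
  apply ContinuousLinearMap.ext; intro y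
  simp [fstL_inrL_apply]

lemma sndL_Delta (B : Y →L[ℂ] WithLp 2 (H₀ × H₁)) :
    sndL ∘L (((inrL (H₀ := H₀) (H₁ := H₁)) ∘L sndL) ∘L B) = sndL ∘L B := by
  apply ContinuousLinearMap.ext; intro y
  simp [sndL_inrL_apply]

end Aux

/-- Proposition (q and r), part (c): for `F` with block-matrix form `[[k, m], [l, w - 1]]`,
`q(F*) = 0` if and only if `w` is a coisometry, `k + k* + m m* = 0` and `l = -w m*`. -/
theorem qr_proposition_c
    (F : WithLp 2 (H₀ × H₁) →L[ℂ] WithLp 2 (H₀ × H₁))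
    (k : H₀ →L[ℂ] H₀) (l : H₀ →L[ℂ] H₁) (m : H₁ →L[ℂ] H₀) (w : H₁ →L[ℂ] H₁)
    (hk : fstL ∘L (F ∘L inlL) = k) (hl : sndL ∘L (F ∘L inlL) = l)
    (hm : fstL ∘L (F ∘L inrL) = m) (hw : sndL ∘L (F ∘L inrL) = w - 1) :
    qOp (star F) = 0 ↔
      (w * star w = 1 ∧ k + star k + m ∘L adjoint m = 0 ∧ l = -(w ∘L adjoint m)) := by
  set Δ : WithLp 2 (H₀ × H₁) →L[ℂ] WithLp 2 (H₀ × H₁) := inrL ∘L sndL with hΔ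
  set G := ContinuousLinearMap.adjoint F with hG
  -- blocks of G
  have gk : fstL ∘L (G ∘L inlL) = ContinuousLinearMap.adjoint k := by
    rw [← hk, adjoint_block, adjoint_inlL, adjoint_fstL]
  have gl : fstL ∘L (G ∘L inrL) = ContinuousLinearMap.adjoint l := by
    rw [← hl, adjoint_block, adjoint_inlL, adjoint_sndL]
  have gm : sndL ∘L (G ∘L inlL) = ContinuousLinearMap.adjoint m := by
    rw [← hm, adjoint_block, adjoint_inrL, adjoint_fstL]
  have gw : sndL ∘L (G ∘L inrL) = ContinuousLinearMap.adjoint w - 1 := by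
    have h := congrArg (ContinuousLinearMap.adjoint (𝕜 := ℂ)) hw
    rw [adjoint_block, adjoint_inrL, adjoint_sndL, map_sub] at h
    rw [h, ← ContinuousLinearMap.star_eq_adjoint (1 : H₁ →L[ℂ] H₁), star_one]
  -- blocks of Δ ∘L G
  have d0l : fstL ∘L ((Δ ∘L G) ∘L inlL) = 0 := by
    rw [hΔ, ContinuousLinearMap.comp_assoc]; exact fstL_Delta _
  have d0r : fstL ∘L ((Δ ∘L G) ∘L inrL) = 0 := by
    rw [hΔ, ContinuousLinearMap.comp_assoc]; exact fstL_Delta _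
  have d1l : sndL ∘L ((Δ ∘L G) ∘L inlL) = ContinuousLinearMap.adjoint m := by
    rw [hΔ, ContinuousLinearMap.comp_assoc, sndL_Delta, gm]
  have d1r : sndL ∘L ((Δ ∘L G) ∘L inrL) = ContinuousLinearMap.adjoint w - 1 := by
    rw [hΔ, ContinuousLinearMap.comp_assoc, sndL_Delta, gw]
  -- blocks of P := F ∘L (Δ ∘L G)
  set P := F ∘L (Δ ∘L G) with hP
  have p00 : fstL ∘L (P ∘L inlL) = m ∘L ContinuousLinearMap.adjoint m := by
    rw [hP, mul_block, d0l, d1l, hk, hm, ContinuousLinearMap.comp_zero, zero_add]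
  have p01 : fstL ∘L (P ∘L inrL) = m ∘L (ContinuousLinearMap.adjoint w - 1) := by
    rw [hP, mul_block, d0r, d1r, hk, hm, ContinuousLinearMap.comp_zero, zero_add]
  have p10 : sndL ∘L (P ∘L inlL) = (w - 1) ∘L ContinuousLinearMap.adjoint m := by
    rw [hP, mul_block, d0l, d1l, hl, hw, ContinuousLinearMap.comp_zero, zero_add]
  have p11 : sndL ∘L (P ∘L inrL) = (w - 1) ∘L (ContinuousLinearMap.adjoint w - 1) := by
    rw [hP, mul_block, d0r, d1r, hl, hw, ContinuousLinearMap.comp_zero, zero_add]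
  -- qOp (star F) = F + G + P
  have hQ : qOp (star F) = F + G + P := by
    rw [qOp, star_star, ContinuousLinearMap.star_eq_adjoint, hP]
    rfl
  -- blocks of Q
  have Q00 : fstL ∘L (qOp (star F) ∘L inlL)
      = k + ContinuousLinearMap.adjoint k + m ∘L ContinuousLinearMap.adjoint m := by
    rw [hQ]
    simp only [ContinuousLinearMap.add_comp, ContinuousLinearMap.comp_add]
    rw [hk, gk, p00]
  have Q01 : fstL ∘L (qOp (star F) ∘L inrL)
      = ContinuousLinearMap.adjoint l + m ∘L ContinuousLinearMap.adjoint w := by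
    rw [hQ]
    simp only [ContinuousLinearMap.add_comp, ContinuousLinearMap.comp_add]
    rw [hm, gl, p01, ContinuousLinearMap.comp_sub]
    simp only [ContinuousLinearMap.one_def, ContinuousLinearMap.comp_id]
    abel
  have Q10 : sndL ∘L (qOp (star F) ∘L inlL)
      = l + w ∘L ContinuousLinearMap.adjoint m := by
    rw [hQ]
    simp only [ContinuousLinearMap.add_comp, ContinuousLinearMap.comp_add]
    rw [hl, gm, p10, ContinuousLinearMap.sub_comp]
    simp only [ContinuousLinearMap.one_def, ContinuousLinearMap.id_comp]
    abel
  have Q11 : sndL ∘L (qOp (star F) ∘L inrL)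
      = w ∘L ContinuousLinearMap.adjoint w - 1 := by
    rw [hQ]
    simp only [ContinuousLinearMap.add_comp, ContinuousLinearMap.comp_add]
    rw [hw, gw, p11, ContinuousLinearMap.sub_comp, ContinuousLinearMap.comp_sub,
      ContinuousLinearMap.comp_sub]
    simp only [ContinuousLinearMap.one_def, ContinuousLinearMap.id_comp,
      ContinuousLinearMap.comp_id]
    abel
  have hsw : w * star w = w ∘L ContinuousLinearMap.adjoint w := by
    rw [ContinuousLinearMap.mul_def, ContinuousLinearMap.star_eq_adjoint]
  have hsk : (star k : H₀ →L[ℂ] H₀) = ContinuousLinearMap.adjoint k :=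
    ContinuousLinearMap.star_eq_adjoint k
  constructor
  · intro h
    rw [h] at Q00 Q01 Q10 Q11
    simp only [ContinuousLinearMap.comp_zero, ContinuousLinearMap.zero_comp] at Q00 Q01 Q10 Q11
    refine ⟨by rw [hsw, ← sub_eq_zero, ← Q11], by rw [hsk, ← Q00], ?_⟩
    have h' := Q10.symm
    rw [add_eq_zero_iff_eq_neg] at h'
    exact h'
  · rintro ⟨h1, h2, h3⟩
    rw [hsw] at h1
    rw [hsk] at h2
    apply block_ext
    · rw [Q00]; exact h2
    · rw [Q01, h3, map_neg, ContinuousLinearMap.adjoint_comp,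
        ContinuousLinearMap.adjoint_adjoint]
      abel
    · rw [Q10, h3]; abel
    · rw [Q11, h1, sub_self]
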